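/- Let φ : M_m(ℂ) → M_n(ℂ) be a 2k-positive linear map (k ≥ 2) that is not completely positive. Then φ ⊗ id_k : M_m(ℂ) ⊗ M_k(ℂ) → M_n(ℂ) ⊗ M_k(ℂ) is positive but not decomposable. In particular, a 4-positive non-CP map φ yields a 2-positive indecomposable map φ ⊗ id_2. -/

import Mathlib

/-!
Positivity of `φ ⊗ id_k` is `k`-positivity of `φ` after reordering the tensor factors.

Indecomposability comes from an explicit PPT witness. On `(ℂᵐ ⊗ ℂᵏ) ⊗ (ℂᵐ ⊗ ℂᵏ)` let
`ρ = k |Ω⟩⟨Ω| + 2 (k - 1 ⊗ |ω⟩⟨ω|)`, with `Ω`, `ω` the unnormalised maximally entangled vectors of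
`(ℂᵐ ⊗ ℂᵏ)^⊗2` and `(ℂᵏ)^⊗2`. Both terms are positive semidefinite, and the partial transpose
`ρ^Γ = k F + 2 (k - F_k) = k (1 + F) + 2 (1 - F_k) + (k - 2)` (with `F`, `F_k` the flips) is
positive semidefinite because `k ≥ 2`. A decomposable map `ψ = α + β` sends such a `ρ` to
`(id ⊗ α)(ρ) + (t ⊗ β)(ρ^Γ) ≥ 0`. For `ψ = φ ⊗ id_k`, compressing `(id ⊗ ψ)(ρ)` by `x ↦ x ⊗ ω`
gives `k³` times the Choi matrix of `φ`, so the Choi matrix is positive semidefinite and `φ` is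
completely positive.
-/
open scoped ComplexOrder Kronecker

/-- The amplification `(id_r ⊗ ψ)` of a linear map `ψ` between complex matrix algebras,
acting blockwise on an `r × r` block matrix (indices flattened). -/
def ampl {I J : Type*} [Fintype I] (ψ : Matrix I I ℂ →ₗ[ℂ] Matrix J J ℂ) (r : ℕ)
    (M : Matrix (Fin r × I) (Fin r × I) ℂ) : Matrix (Fin r × J) (Fin r × J) ℂ :=
  Matrix.of fun p q => ψ (Matrix.of fun s t => M (p.1, s) (q.1, t)) p.2 q.2

/-- The amplification `(t_r ⊗ ψ)` (transpose on the outer factor):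
block `(i, j)` of the output is `ψ` applied to block `(j, i)` of the input. -/
def amplT {I J : Type*} [Fintype I] (ψ : Matrix I I ℂ →ₗ[ℂ] Matrix J J ℂ) (r : ℕ)
    (M : Matrix (Fin r × I) (Fin r × I) ℂ) : Matrix (Fin r × J) (Fin r × J) ℂ :=
  Matrix.of fun p q => ψ (Matrix.of fun s t => M (q.1, s) (p.1, t)) p.2 q.2

/-- `ψ` is `r`-positive: the `r`-th amplification preserves positive semidefiniteness. -/
def IsPositiveAt {I J : Type*} [Fintype I] [Fintype J]
    (ψ : Matrix I I ℂ →ₗ[ℂ] Matrix J J ℂ) (r : ℕ) : Prop :=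
  ∀ M : Matrix (Fin r × I) (Fin r × I) ℂ, M.PosSemidef → (ampl ψ r M).PosSemidef

/-- `ψ` is completely positive. -/
def IsCompletelyPositive {I J : Type*} [Fintype I] [Fintype J]
    (ψ : Matrix I I ℂ →ₗ[ℂ] Matrix J J ℂ) : Prop :=
  ∀ r : ℕ, IsPositiveAt ψ r

/-- `ψ` is completely copositive: every amplification `t_r ⊗ ψ` (with the transpose on
the outer factor) preserves positive semidefiniteness. -/
def IsCompletelyCopositive {I J : Type*} [Fintype I] [Fintype J]
    (ψ : Matrix I I ℂ →ₗ[ℂ] Matrix J J ℂ) : Prop :=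
  ∀ (r : ℕ) (M : Matrix (Fin r × I) (Fin r × I) ℂ), M.PosSemidef → (amplT ψ r M).PosSemidef

/-- The map `φ ⊗ id_k` determined by `a ⊗ b ↦ φ a ⊗ b` (indices flattened). -/
def tensId {m n : ℕ} (φ : Matrix (Fin m) (Fin m) ℂ →ₗ[ℂ] Matrix (Fin n) (Fin n) ℂ)
    (k : ℕ) (M : Matrix (Fin m × Fin k) (Fin m × Fin k) ℂ) :
    Matrix (Fin n × Fin k) (Fin n × Fin k) ℂ :=
  Matrix.of fun p q => φ (Matrix.of fun u v => M (u, p.2) (v, q.2)) p.1 q.1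



open Matrix

namespace Matrix

variable {R I α : Type*}

def partialTranspose (M : Matrix (R × I) (R × I) α) : Matrix (R × I) (R × I) α :=
  of fun p q => M (q.1, p.2) (p.1, q.2)

@[simp]
lemma partialTranspose_apply (M : Matrix (R × I) (R × I) α) (p q : R × I) :
    M.partialTranspose p q = M (q.1, p.2) (p.1, q.2) := rfl

@[simp]
lemma partialTranspose_add [Add α] (M N : Matrix (R × I) (R × I) α) :
    (M + N).partialTranspose = M.partialTranspose + N.partialTranspose := rfl

@[simp]
lemma partialTranspose_sub [Sub α] (M N : Matrix (R × I) (R × I) α) :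
    (M - N).partialTranspose = M.partialTranspose - N.partialTranspose := rfl

@[simp]
lemma partialTranspose_smul {β : Type*} [SMul β α] (b : β) (M : Matrix (R × I) (R × I) α) :
    (b • M).partialTranspose = b • M.partialTranspose := rfl

@[simp]
lemma partialTranspose_one [Zero α] [One α] [DecidableEq R] [DecidableEq I] :
    (1 : Matrix (R × I) (R × I) α).partialTranspose = 1 := by
  ext p q
  simp only [partialTranspose_apply, one_apply, Prod.ext_iff]
  grind

end Matrix

section PosSemidef

variable {X Y : Type*}

lemma Matrix.PosSemidef.exists_posSemidef_submatrix_eq [Fintype X] [Fintype Y]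
    [DecidableEq X] [DecidableEq Y] {M : Matrix X X ℂ} (hM : M.PosSemidef) (f : X ↪ Y) :
    ∃ N : Matrix Y Y ℂ, N.PosSemidef ∧ N.submatrix f f = M := by
  let V : Matrix Y X ℂ := (1 : Matrix Y Y ℂ).submatrix id f
  refine ⟨V * M * Vᴴ, hM.mul_mul_conjTranspose_same V, ?_⟩
  rw [submatrix_mul _ _ f id f Function.bijective_id,
    submatrix_mul _ _ f id id Function.bijective_id]
  simp [V, conjTranspose_submatrix]

lemma Matrix.PosSemidef.of_nsmul {M : Matrix X X ℂ} {c : ℕ} (hc : 0 < c)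
    (hM : (c • M).PosSemidef) : M.PosSemidef := by
  have : M = (c : ℝ)⁻¹ • (c • M) := by
    rw [← Nat.cast_smul_eq_nsmul ℝ, smul_smul, inv_mul_cancel₀ (by positivity), one_smul]
  rw [this]
  exact hM.smul (by positivity)

lemma Matrix.IsHermitian.posSemidef_of_mul_self_eq_nsmul [Fintype X] {M : Matrix X X ℂ}
    (hM : M.IsHermitian) {c : ℕ} (hc : 0 < c) (h : M * M = c • M) : M.PosSemidef := by
  refine .of_nsmul hc ?_
  have := posSemidef_conjTranspose_mul_self M
  rwa [hM.eq, h] at this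

variable [Fintype X] [DecidableEq X]

lemma Matrix.IsHermitian.posSemidef_one_add_of_mul_self_eq_one {M : Matrix X X ℂ}
    (hM : M.IsHermitian) (h : M * M = 1) : (1 + M).PosSemidef := by
  refine (isHermitian_one.add hM).posSemidef_of_mul_self_eq_nsmul two_pos ?_
  simp only [add_mul, mul_add, h, one_mul, mul_one, two_smul]
  abel

lemma Matrix.posSemidef_nsmul_one_sub_mul_conjTranspose [Fintype Y] [DecidableEq Y]
    {T : Matrix X Y ℂ} {c : ℕ} (hT : Tᴴ * T = c • (1 : Matrix Y Y ℂ)) :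
    (c • 1 - T * Tᴴ).PosSemidef := by
  rcases c.eq_zero_or_pos with rfl | hc
  · rw [zero_smul, conjTranspose_mul_self_eq_zero] at hT
    simpa [hT] using PosSemidef.zero
  have hH : (c • 1 - T * Tᴴ).IsHermitian := by
    simp [IsHermitian, conjTranspose_sub]
  refine hH.posSemidef_of_mul_self_eq_nsmul hc ?_
  have hTT : T * Tᴴ * (T * Tᴴ) = c • (T * Tᴴ) := by
    rw [Matrix.mul_assoc, ← Matrix.mul_assoc Tᴴ, hT, Matrix.smul_mul, Matrix.one_mul,
      Matrix.mul_smul]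
  simp only [sub_mul, mul_sub, hTT, Matrix.smul_mul, Matrix.mul_smul, Matrix.one_mul,
    Matrix.mul_one, smul_sub, smul_smul]
  abel

end PosSemidef

section Involution

variable {X : Type*} [DecidableEq X] {σ : Equiv.Perm X}

lemma Equiv.Perm.isHermitian_permMatrix (hσ : σ * σ = 1) : (σ.permMatrix ℂ).IsHermitian := by
  rw [IsHermitian, conjTranspose_permMatrix, inv_eq_of_mul_eq_one_left hσ]

variable [Fintype X]

lemma Equiv.Perm.permMatrix_mul_self (hσ : σ * σ = 1) :
    σ.permMatrix ℂ * σ.permMatrix ℂ = 1 := by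
  rw [← permMatrix_mul, hσ, permMatrix_one]

lemma Equiv.Perm.posSemidef_one_add_permMatrix (hσ : σ * σ = 1) :
    (1 + σ.permMatrix ℂ).PosSemidef :=
  (isHermitian_permMatrix hσ).posSemidef_one_add_of_mul_self_eq_one (permMatrix_mul_self hσ)

lemma Equiv.Perm.posSemidef_one_sub_permMatrix (hσ : σ * σ = 1) :
    (1 - σ.permMatrix ℂ).PosSemidef := by
  rw [sub_eq_add_neg]
  exact (isHermitian_permMatrix hσ).neg.posSemidef_one_add_of_mul_self_eq_one
    (by rw [neg_mul_neg, permMatrix_mul_self hσ])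

end Involution

def blockApply {R I J : Type*} (ψ : Matrix I I ℂ → Matrix J J ℂ)
    (M : Matrix (R × I) (R × I) ℂ) : Matrix (R × J) (R × J) ℂ :=
  of fun p q => ψ (of fun s t => M (p.1, s) (q.1, t)) p.2 q.2

section Amplification

variable {R I J : Type*} [Fintype R] [Fintype I] [Fintype J]

lemma IsPositiveAt.blockApply_posSemidef {ψ : Matrix I I ℂ →ₗ[ℂ] Matrix J J ℂ} {r : ℕ}
    (hψ : IsPositiveAt ψ r) (e : R ↪ Fin r) {M : Matrix (R × I) (R × I) ℂ}
    (hM : M.PosSemidef) : (blockApply ψ M).PosSemidef := by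
  classical
  obtain ⟨N, hN, rfl⟩ := hM.exists_posSemidef_submatrix_eq (e.prodMap (.refl I))
  exact (hψ N hN).submatrix (e.prodMap (.refl J))

lemma IsCompletelyPositive.blockApply_posSemidef {ψ : Matrix I I ℂ →ₗ[ℂ] Matrix J J ℂ}
    (hψ : IsCompletelyPositive ψ) {M : Matrix (R × I) (R × I) ℂ} (hM : M.PosSemidef) :
    (blockApply ψ M).PosSemidef :=
  (hψ _).blockApply_posSemidef (Fintype.equivFin R).toEmbedding hM

lemma IsCompletelyCopositive.blockApply_posSemidef {ψ : Matrix I I ℂ →ₗ[ℂ] Matrix J J ℂ}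
    (hψ : IsCompletelyCopositive ψ) {M : Matrix (R × I) (R × I) ℂ}
    (hM : M.partialTranspose.PosSemidef) : (blockApply ψ M).PosSemidef := by
  let e := (Fintype.equivFin R).prodCongr (Equiv.refl I)
  convert (hψ _ _ (hM.submatrix e.symm)).submatrix ((Fintype.equivFin R).prodCongr (.refl J))
    using 1
  ext p q
  simp [blockApply, amplT, e]

lemma blockApply_posSemidef_of_decomposable {ψ : Matrix I I ℂ → Matrix J J ℂ}
    {α β : Matrix I I ℂ →ₗ[ℂ] Matrix J J ℂ} (hα : IsCompletelyPositive α)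
    (hβ : IsCompletelyCopositive β) (hψ : ∀ N, ψ N = α N + β N)
    {M : Matrix (R × I) (R × I) ℂ} (hM : M.PosSemidef) (hMΓ : M.partialTranspose.PosSemidef) :
    (blockApply ψ M).PosSemidef := by
  have : blockApply ψ M = blockApply α M + blockApply β M := by
    ext p q
    simp [blockApply, hψ]
  rw [this]
  exact (hα.blockApply_posSemidef hM).add (hβ.blockApply_posSemidef hMΓ)

end Amplification

lemma IsPositiveAt.tensId_posSemidef {m n r : ℕ}
    {φ : Matrix (Fin m) (Fin m) ℂ →ₗ[ℂ] Matrix (Fin n) (Fin n) ℂ} (hφ : IsPositiveAt φ r)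
    {k : ℕ} (hkr : k ≤ r) {M : Matrix (Fin m × Fin k) (Fin m × Fin k) ℂ}
    (hM : M.PosSemidef) : (tensId φ k M).PosSemidef :=
  (hφ.blockApply_posSemidef (Fin.castLEEmb hkr) (hM.submatrix Prod.swap)).submatrix Prod.swap

section Choi

variable {I J : Type*} [Fintype I] [DecidableEq I]

def choi (ψ : Matrix I I ℂ →ₗ[ℂ] Matrix J J ℂ) : Matrix (I × J) (I × J) ℂ :=
  of fun x y => ψ (single x.1 y.1 1) x.2 y.2

lemma apply_eq_sum_choi (ψ : Matrix I I ℂ →ₗ[ℂ] Matrix J J ℂ) (N : Matrix I I ℂ) (i j : J) :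
    ψ N i j = ∑ u, ∑ v, N u v * choi ψ (u, i) (v, j) := by
  conv_lhs => rw [matrix_eq_sum_single N]
  simp only [map_sum, Matrix.sum_apply]
  refine Finset.sum_congr rfl fun u _ => Finset.sum_congr rfl fun v _ => ?_
  rw [← mul_one (N u v), ← smul_eq_mul, ← smul_single, map_smul]
  simp [choi]

open scoped MatrixOrder in
lemma IsCompletelyPositive.of_posSemidef_choi [Fintype J]
    {ψ : Matrix I I ℂ →ₗ[ℂ] Matrix J J ℂ} (hψ : (choi ψ).PosSemidef) :
    IsCompletelyPositive ψ := by
  classical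
  intro r M hM
  obtain ⟨L, rfl⟩ := CStarAlgebra.nonneg_iff_eq_star_mul_self.mp hM.nonneg
  let Y : Fin r × I → Matrix (I × J) (Fin r × J) ℂ := fun s =>
    of fun x p => if x.2 = p.2 then L s (p.1, x.1) else 0
  have hY : ∀ s p q, ((Y s)ᴴ * choi ψ * Y s) p q
      = ∑ u, ∑ v, star (L s (p.1, u)) * choi ψ (u, p.2) (v, q.2) * L s (q.1, v) := by
    intro s p q
    simp only [mul_apply, conjTranspose_apply, of_apply, RCLike.star_def,
      apply_ite (starRingEnd ℂ), map_zero, ite_mul, zero_mul, Fintype.sum_prod_type,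
      Finset.sum_ite_eq', Finset.mem_univ, ↓reduceIte, mul_ite, Finset.sum_mul, mul_zero, Y]
    exact Finset.sum_comm
  have hL : ampl ψ r (star L * L) = ∑ s, (Y s)ᴴ * choi ψ * Y s := by
    ext p q
    simp only [ampl, of_apply, apply_eq_sum_choi ψ, Matrix.sum_apply, hY, mul_apply, star_apply,
      Finset.sum_mul]
    rw [Finset.sum_comm_cycle]
    exact Finset.sum_congr rfl fun s _ => Finset.sum_congr rfl fun u _ =>
      Finset.sum_congr rfl fun v _ => mul_right_comm _ _ _
  rw [hL]
  exact posSemidef_sum _ fun s _ => hψ.conjTranspose_mul_mul_same (Y s)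

end Choi

section Witness

variable (ι ι' κ : Type*) [DecidableEq ι] [DecidableEq ι'] [DecidableEq κ]

/-- The map `x ↦ x ⊗ ω`, where `ω = ∑ c, e_c ⊗ e_c ∈ ℂ^κ ⊗ ℂ^κ`; the tensor factors are
interleaved as `(ι × κ) × (ι' × κ)`, the index order of `blockApply`. -/
def tensorMaxEnt : Matrix ((ι × κ) × (ι' × κ)) (ι × ι') ℂ :=
  of fun p y => if p.1.1 = y.1 ∧ p.2.1 = y.2 ∧ p.1.2 = p.2.2 then 1 else 0

def maxEntVec (A : Type*) [DecidableEq A] : A × A → ℂ := fun p => if p.1 = p.2 then 1 else 0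

@[simps]
def swapRight : Equiv.Perm ((ι × κ) × (ι × κ)) where
  toFun p := ((p.1.1, p.2.2), (p.2.1, p.1.2))
  invFun p := ((p.1.1, p.2.2), (p.2.1, p.1.2))
  left_inv _ := rfl
  right_inv _ := rfl

/-- `k |Ω⟩⟨Ω| + 2 (k - 1 ⊗ |ω⟩⟨ω|)` with `k = card κ`, `Ω = maxEntVec (ι × κ)`, and `ω` as in
`tensorMaxEnt`. -/
def pptWitness [Fintype ι] [Fintype κ] : Matrix ((ι × κ) × (ι × κ)) ((ι × κ) × (ι × κ)) ℂ :=
  Fintype.card κ • vecMulVec (maxEntVec (ι × κ)) (star (maxEntVec (ι × κ)))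
    + 2 • (Fintype.card κ • 1 - tensorMaxEnt ι ι κ * (tensorMaxEnt ι ι κ)ᴴ)

variable {ι ι' κ} [Fintype ι] [Fintype ι']

lemma tensorMaxEnt_mul_conjTranspose_apply (p q : (ι × κ) × (ι' × κ)) :
    (tensorMaxEnt ι ι' κ * (tensorMaxEnt ι ι' κ)ᴴ) p q
      = if p.1.1 = q.1.1 ∧ p.2.1 = q.2.1 ∧ p.1.2 = p.2.2 ∧ q.1.2 = q.2.2 then 1 else 0 := by
  simp only [tensorMaxEnt, ite_and, mul_apply, of_apply, conjTranspose_apply, RCLike.star_def,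
    apply_ite (starRingEnd ℂ), map_one, map_zero, mul_ite, mul_one, mul_zero,
    Fintype.sum_prod_type, Finset.sum_ite_irrel, Finset.sum_ite_eq, Finset.mem_univ,
    ↓reduceIte, Finset.sum_const_zero]
  split_ifs <;> simp_all

lemma partialTranspose_tensorMaxEnt_mul_conjTranspose :
    (tensorMaxEnt ι ι κ * (tensorMaxEnt ι ι κ)ᴴ).partialTranspose
      = (swapRight ι κ).permMatrix ℂ := by
  ext p q
  simp only [partialTranspose_apply, tensorMaxEnt_mul_conjTranspose_apply, PEquiv.toMatrix_apply,
    Equiv.toPEquiv_apply, swapRight_apply, Option.mem_def, Option.some.injEq, Prod.ext_iff]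
  grind

lemma partialTranspose_vecMulVec_maxEntVec {A : Type*} [DecidableEq A] :
    (vecMulVec (maxEntVec A) (star (maxEntVec A))).partialTranspose
      = Equiv.Perm.permMatrix ℂ (Equiv.prodComm A A) := by
  ext p q
  simp only [partialTranspose_apply, vecMulVec_apply, maxEntVec, Pi.star_apply, RCLike.star_def,
    MonoidWithZeroHom.map_ite_one_zero, mul_ite, mul_one, mul_zero, PEquiv.toMatrix_apply,
    Equiv.toPEquiv_apply, Equiv.prodComm_apply, Option.mem_def, Option.some.injEq, Prod.ext_iff,
    Prod.fst_swap, Prod.snd_swap]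
  grind

variable [Fintype κ]

lemma conjTranspose_tensorMaxEnt_mul_self :
    (tensorMaxEnt ι ι' κ)ᴴ * tensorMaxEnt ι ι' κ
      = Fintype.card κ • (1 : Matrix (ι × ι') (ι × ι') ℂ) := by
  ext x y
  simp only [tensorMaxEnt, ite_and, mul_apply, conjTranspose_apply, of_apply, RCLike.star_def,
    apply_ite (starRingEnd ℂ), map_one, map_zero, mul_ite, mul_one, mul_zero,
    Fintype.sum_prod_type, Finset.sum_ite_irrel, Finset.sum_ite_eq, Finset.mem_univ,
    ↓reduceIte, Finset.sum_const_zero, Finset.sum_ite_eq', Matrix.smul_apply, one_apply,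
    Prod.ext_iff]
  split_ifs <;> simp_all

lemma conjTranspose_tensorMaxEnt_mul_mul_apply
    (M : Matrix ((ι × κ) × (ι' × κ)) ((ι × κ) × (ι' × κ)) ℂ) (x y : ι × ι') :
    ((tensorMaxEnt ι ι' κ)ᴴ * M * tensorMaxEnt ι ι' κ) x y
      = ∑ c, ∑ d, M ((x.1, c), (x.2, c)) ((y.1, d), (y.2, d)) := by
  simp only [tensorMaxEnt, ite_and, mul_apply, conjTranspose_apply, of_apply, RCLike.star_def,
    apply_ite (starRingEnd ℂ), map_one, map_zero, ite_mul, one_mul, zero_mul,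
    Fintype.sum_prod_type, Finset.sum_ite_irrel, Finset.sum_ite_eq, Finset.mem_univ,
    ↓reduceIte, Finset.sum_const_zero, Finset.sum_ite_eq', mul_ite, mul_one, mul_zero]
  exact Finset.sum_comm

lemma posSemidef_pptWitness : (pptWitness ι κ).PosSemidef :=
  ((posSemidef_vecMulVec_self_star _).smul (Nat.zero_le _)).add
    ((posSemidef_nsmul_one_sub_mul_conjTranspose conjTranspose_tensorMaxEnt_mul_self).smul
      (Nat.zero_le _))

lemma partialTranspose_pptWitness : (pptWitness ι κ).partialTranspose
    = Fintype.card κ • Equiv.Perm.permMatrix ℂ (Equiv.prodComm (ι × κ) (ι × κ))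
      + 2 • (Fintype.card κ • 1 - (swapRight ι κ).permMatrix ℂ) := by
  simp only [pptWitness, partialTranspose_add, partialTranspose_smul, partialTranspose_sub,
    partialTranspose_vecMulVec_maxEntVec, partialTranspose_one,
    partialTranspose_tensorMaxEnt_mul_conjTranspose]

lemma posSemidef_partialTranspose_pptWitness (hk : 2 ≤ Fintype.card κ) :
    (pptWitness ι κ).partialTranspose.PosSemidef := by
  obtain ⟨j, hj⟩ := Nat.exists_eq_add_of_le' hk
  set F := Equiv.Perm.permMatrix ℂ (Equiv.prodComm (ι × κ) (ι × κ))
  set Fκ := (swapRight ι κ).permMatrix ℂ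
  have hF : (1 + F).PosSemidef := Equiv.Perm.posSemidef_one_add_permMatrix (by ext <;> rfl)
  have hFκ : (1 - Fκ).PosSemidef := Equiv.Perm.posSemidef_one_sub_permMatrix (by ext <;> rfl)
  have : (j + 2) • F + 2 • ((j + 2) • 1 - Fκ) = (j + 2) • (1 + F) + 2 • (1 - Fκ) + j • 1 := by
    simp only [add_smul, smul_add, smul_sub]
    abel
  rw [partialTranspose_pptWitness, hj, this]
  exact ((hF.smul (Nat.zero_le _)).add (hFκ.smul (Nat.zero_le _))).add
    (PosSemidef.one.smul (Nat.zero_le _))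

lemma sum_blocks_pptWitness (a b : ι) :
    ∑ c, ∑ d, (of fun u v => pptWitness ι κ ((a, c), (u, c)) ((b, d), (v, d)))
      = Fintype.card κ ^ 3 • single a b (1 : ℂ) := by
  ext u v
  simp only [Matrix.sum_apply, of_apply, pptWitness, Matrix.add_apply, Matrix.smul_apply,
    Matrix.sub_apply, vecMulVec_apply, tensorMaxEnt_mul_conjTranspose_apply, maxEntVec,
    one_apply, single_apply, Pi.star_apply, Prod.mk.injEq, and_true, Finset.sum_add_distrib]
  simp only [RCLike.star_def, MonoidWithZeroHom.map_ite_one_zero, mul_ite, mul_one, mul_zero,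
    smul_ite, nsmul_eq_mul, Finset.sum_ite_irrel, Finset.sum_const, Finset.card_univ,
    Finset.sum_sub_distrib, Finset.sum_ite_eq, Finset.mem_univ, ↓reduceIte, ← Finset.mul_sum,
    ite_and]
  grind

end Witness

lemma conjTranspose_tensorMaxEnt_mul_blockApply_tensId_pptWitness_mul {m n k : ℕ}
    (φ : Matrix (Fin m) (Fin m) ℂ →ₗ[ℂ] Matrix (Fin n) (Fin n) ℂ) :
    (tensorMaxEnt (Fin m) (Fin n) (Fin k))ᴴ * blockApply (tensId φ k) (pptWitness (Fin m) (Fin k))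
      * tensorMaxEnt (Fin m) (Fin n) (Fin k) = k ^ 3 • choi φ := by
  ext x y
  have := congrArg (fun N => φ N x.2 y.2) (sum_blocks_pptWitness (κ := Fin k) x.1 y.1)
  simp only [map_sum, map_nsmul, Matrix.sum_apply, Matrix.smul_apply, Fintype.card_fin] at this
  rw [conjTranspose_tensorMaxEnt_mul_mul_apply, Matrix.smul_apply]
  exact this

/-- **Piani–Mora.** -/
theorem IsCompletelyPositive.of_tensId_decomposable {m n k : ℕ} (hk : 2 ≤ k)
    {φ : Matrix (Fin m) (Fin m) ℂ →ₗ[ℂ] Matrix (Fin n) (Fin n) ℂ}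
    {α β : Matrix (Fin m × Fin k) (Fin m × Fin k) ℂ →ₗ[ℂ]
      Matrix (Fin n × Fin k) (Fin n × Fin k) ℂ}
    (hα : IsCompletelyPositive α) (hβ : IsCompletelyCopositive β)
    (hφ : ∀ M, tensId φ k M = α M + β M) : IsCompletelyPositive φ := by
  have hk' : 2 ≤ Fintype.card (Fin k) := by simpa using hk
  have hρ := blockApply_posSemidef_of_decomposable hα hβ hφ posSemidef_pptWitness
    (posSemidef_partialTranspose_pptWitness hk')
  have hchoi := hρ.conjTranspose_mul_mul_same (tensorMaxEnt (Fin m) (Fin n) (Fin k))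
  rw [conjTranspose_tensorMaxEnt_mul_blockApply_tensId_pptWitness_mul] at hchoi
  exact .of_posSemidef_choi (hchoi.of_nsmul (by positivity))

/-- if `φ : M_m(ℂ) → M_n(ℂ)` is `2k`-positive (`k ≥ 2`) but not completely
positive, then `φ ⊗ id_k` is positive but not decomposable (not a sum of a completely
positive and a completely copositive map). -/
theorem tensId_positive_not_decomposable {m n : ℕ} (k : ℕ) (hk : 2 ≤ k)
    (φ : Matrix (Fin m) (Fin m) ℂ →ₗ[ℂ] Matrix (Fin n) (Fin n) ℂ)
    (hφ2k : IsPositiveAt φ (2 * k)) (hφ : ¬ IsCompletelyPositive φ) :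
    (∀ M : Matrix (Fin m × Fin k) (Fin m × Fin k) ℂ, M.PosSemidef →
        (tensId φ k M).PosSemidef) ∧
    ¬ ∃ α β : Matrix (Fin m × Fin k) (Fin m × Fin k) ℂ →ₗ[ℂ]
          Matrix (Fin n × Fin k) (Fin n × Fin k) ℂ,
        IsCompletelyPositive α ∧ IsCompletelyCopositive β ∧
          ∀ M : Matrix (Fin m × Fin k) (Fin m × Fin k) ℂ, tensId φ k M = α M + β M := by
  refine ⟨fun M hM => hφ2k.tensId_posSemidef (by omega) hM, ?_⟩
  rintro ⟨α, β, hα, hβ, hsum⟩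
  exact hφ (.of_tensId_decomposable hk hα hβ hsum)
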